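/- arXiv:1904.10665 — 3 statements merged into one kernel-verified Lean document; each statement's English description precedes it below -/
import Mathlib

section
/- Under the same hypotheses, the homogenized tensor K* is positive definite: for every nonzero ξ ∈ ℝ^d, ξᵀ K* ξ ≥ β‖ξ‖² > 0, where β is the ellipticity constant of K. -/
open Matrix MeasureTheory

private lemma sum_dp {n ι : Type*} [Fintype n] (s : Finset ι) (f : ι → n → ℝ) (w : n → ℝ) :
    (∑ i ∈ s, f i) ⬝ᵥ w = ∑ i ∈ s, f i ⬝ᵥ w := by
  simp only [dotProduct, Finset.sum_apply, Finset.sum_mul]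
  exact Finset.sum_comm

private lemma dp_sum {n ι : Type*} [Fintype n] (s : Finset ι) (w : n → ℝ) (f : ι → n → ℝ) :
    w ⬝ᵥ (∑ i ∈ s, f i) = ∑ i ∈ s, w ⬝ᵥ f i := by
  simp only [dotProduct, Finset.sum_apply, Finset.mul_sum]
  exact Finset.sum_comm

private lemma cs_sq {α : Type*} [MeasurableSpace α] {μ : Measure α} [IsProbabilityMeasure μ]
    {f : α → ℝ} (hf : Integrable f μ) (hf2 : Integrable (fun x => f x ^ 2) μ) :
    (∫ x, f x ∂μ) ^ 2 ≤ ∫ x, f x ^ 2 ∂μ := by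
  set c := ∫ x, f x ∂μ with hc
  have h0 : 0 ≤ ∫ x, (f x - c) ^ 2 ∂μ := integral_nonneg fun x => sq_nonneg _
  have hi1 : Integrable (fun x => f x ^ 2 - 2 * c * f x) μ := hf2.sub (hf.const_mul _)
  have hexp : ∫ x, (f x - c) ^ 2 ∂μ = (∫ x, f x ^ 2 ∂μ) - c ^ 2 := by
    have he : ∀ x, (f x - c) ^ 2 = (f x ^ 2 - (2 * c) * f x) + c ^ 2 := by
      intro x; ring
    simp_rw [he]
    rw [integral_add hi1 (integrable_const _),
      integral_sub hf2 (hf.const_mul _), integral_const_mul, integral_const]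
    simp [← hc]
    ring
  linarith

/-- Positive definiteness of the homogenized tensor: for every nonzero `ξ`,
`ξᵀ K* ξ ≥ β‖ξ‖² > 0`, where `β` is the ellipticity constant of `K`,
`K*_{ij} = ∫_Y (e_i + ∇ω^i)ᵀ K (e_j + ∇ω^j) dy`, and the periodic correctors have
zero-mean gradients `∫_Y ∇ω^j = 0`. -/
theorem stmt2 {d : ℕ} (K : (Fin d → ℝ) → Matrix (Fin d) (Fin d) ℝ)
    (hmeas : ∀ i j : Fin d, Measurable fun y => K y i j)
    (β lam : ℝ) (hβ : 0 < β)
    (hsymm : ∀ y, (K y).IsSymm)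
    (hell : ∀ y (ψ : Fin d → ℝ),
      β * (ψ ⬝ᵥ ψ) ≤ ψ ⬝ᵥ (K y).mulVec ψ ∧ ψ ⬝ᵥ (K y).mulVec ψ ≤ lam * (ψ ⬝ᵥ ψ))
    (g : Fin d → (Fin d → ℝ) → (Fin d → ℝ))
    (hmeasg : ∀ j, AEStronglyMeasurable (g j) (volume.restrict (Set.Icc (0 : Fin d → ℝ) 1)))
    (hzero : ∀ j, ∫ y in Set.Icc (0 : Fin d → ℝ) 1, g j y = 0)
    (hInt : ∀ i j : Fin d, IntegrableOn
      (fun y => (Pi.single i 1 + g i y) ⬝ᵥ (K y).mulVec (Pi.single j 1 + g j y))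
      (Set.Icc (0 : Fin d → ℝ) 1))
    (Kstar : Matrix (Fin d) (Fin d) ℝ)
    (hKstar : ∀ i j : Fin d, Kstar i j =
      ∫ y in Set.Icc (0 : Fin d → ℝ) 1,
        (Pi.single i 1 + g i y) ⬝ᵥ (K y).mulVec (Pi.single j 1 + g j y)) :
    ∀ ξ : Fin d → ℝ, ξ ≠ 0 →
      β * (ξ ⬝ᵥ ξ) ≤ ξ ⬝ᵥ Kstar.mulVec ξ ∧ 0 < β * (ξ ⬝ᵥ ξ) := by
  intro ξ hξ
  set μ := volume.restrict (Set.Icc (0 : Fin d → ℝ) 1) with hμ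
  haveI : IsProbabilityMeasure μ := by
    constructor
    rw [hμ, Measure.restrict_apply_univ, Real.volume_Icc_pi]
    simp
  set v : Fin d → (Fin d → ℝ) → (Fin d → ℝ) := fun i y => Pi.single i 1 + g i y with hv
  have hdnn : ∀ ψ : Fin d → ℝ, 0 ≤ ψ ⬝ᵥ ψ := fun ψ =>
    Finset.sum_nonneg fun k _ => mul_self_nonneg _
  have hQint : ∀ i j, Integrable (fun y => v i y ⬝ᵥ (K y).mulVec (v j y)) μ := fun i j =>
    hInt i j
  have hKs' : ∀ i j, Kstar i j = ∫ y, v i y ⬝ᵥ (K y).mulVec (v j y) ∂μ := fun i j =>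
    hKstar i j
  -- measurability of components
  have hgm : ∀ i (k : Fin d), AEStronglyMeasurable (fun y => g i y k) μ := fun i k =>
    (continuous_apply k).comp_aestronglyMeasurable (hmeasg i)
  have hvm : ∀ i (k : Fin d), AEStronglyMeasurable (fun y => v i y k) μ := by
    intro i k
    have : (fun y => v i y k) = fun y => (Pi.single i 1 : Fin d → ℝ) k + g i y k := by
      funext y; simp [hv]
    rw [this]
    exact (hgm i k).const_add _
  -- square integrability of components
  have hv2 : ∀ i (k : Fin d), Integrable (fun y => (v i y k) ^ 2) μ := by
    intro i k
    have hbd : ∀ y, (v i y k) ^ 2 ≤ β⁻¹ * (v i y ⬝ᵥ (K y).mulVec (v i y)) := by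
      intro y
      have h1 : β * (v i y k) ^ 2 ≤ v i y ⬝ᵥ (K y).mulVec (v i y) := by
        refine le_trans ?_ (hell y (v i y)).1
        apply mul_le_mul_of_nonneg_left _ hβ.le
        have : (v i y k) ^ 2 = v i y k * v i y k := sq (v i y k) ▸ by ring
        rw [this]
        exact Finset.single_le_sum (f := fun l => v i y l * v i y l)
          (fun l _ => mul_self_nonneg _) (Finset.mem_univ k)
      calc (v i y k) ^ 2 = β⁻¹ * (β * (v i y k) ^ 2) := by field_simp
        _ ≤ β⁻¹ * (v i y ⬝ᵥ (K y).mulVec (v i y)) :=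
            mul_le_mul_of_nonneg_left h1 (inv_nonneg.2 hβ.le)
    refine Integrable.mono' ((hQint i i).const_mul β⁻¹) ?_ ?_
    · have : (fun y => (v i y k) ^ 2) = fun y => v i y k * v i y k := by
        funext y; ring
      rw [this]; exact (hvm i k).mul (hvm i k)
    · exact Filter.Eventually.of_forall fun y => by
        rw [Real.norm_eq_abs, abs_of_nonneg (sq_nonneg _)]; exact hbd y
  have hmem2 : ∀ i (k : Fin d), MemLp (fun y => v i y k) 2 μ := fun i k =>
    (memLp_two_iff_integrable_sq (hvm i k)).2 (hv2 i k)
  have hvint : ∀ i (k : Fin d), Integrable (fun y => v i y k) μ := fun i k =>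
    (hmem2 i k).integrable one_le_two
  have hgcomp : ∀ j (k : Fin d), Integrable (fun y => g j y k) μ := by
    intro j k
    have : (fun y => g j y k) = fun y => v j y k - (Pi.single j 1 : Fin d → ℝ) k := by
      funext y; simp [hv]
    rw [this]
    exact (hvint j k).sub (integrable_const _)
  have hgint : ∀ j, Integrable (g j) μ := by
    intro j
    refine Integrable.mono' (integrable_finset_sum Finset.univ
      (fun k _ => (hgcomp j k).abs)) (hmeasg j) ?_
    refine Filter.Eventually.of_forall fun y => ?_
    refine (pi_norm_le_iff_of_nonneg (Finset.sum_nonneg fun k _ => abs_nonneg _)).2 fun k => ?_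
    calc ‖g j y k‖ = |g j y k| := rfl
      _ ≤ ∑ l, |g j y l| := Finset.single_le_sum (f := fun l => |g j y l|) (fun l _ => abs_nonneg _) (Finset.mem_univ k)
  have hg0 : ∀ j (k : Fin d), ∫ y, g j y k ∂μ = 0 := by
    intro j k
    have h := (ContinuousLinearMap.proj (R := ℝ) (φ := fun _ : Fin d => ℝ) k).integral_comp_comm
      (hgint j)
    simpa [hzero j] using h
  have hvval : ∀ i (k : Fin d), ∫ y, v i y k ∂μ = (Pi.single i 1 : Fin d → ℝ) k := by
    intro i k
    have : (fun y => v i y k) = fun y => (Pi.single i 1 : Fin d → ℝ) k + g i y k := by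
      funext y; simp [hv]
    rw [this, integral_add (integrable_const _) (hgcomp i k), integral_const, hg0]
    simp
  -- the function w and its components
  set wk : Fin d → (Fin d → ℝ) → ℝ := fun k y => ∑ i, ξ i * v i y k with hwk
  have hwmem : ∀ k, MemLp (wk k) 2 μ := by
    intro k
    exact memLp_finset_sum _ (fun i _ => (hmem2 i k).const_mul (ξ i))
  have hwint : ∀ k, Integrable (wk k) μ := fun k => (hwmem k).integrable one_le_two
  have hw2 : ∀ k, Integrable (fun y => (wk k y) ^ 2) μ := fun k =>
    (memLp_two_iff_integrable_sq (hwmem k).aestronglyMeasurable).1 (hwmem k)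
  have hwval : ∀ k, ∫ y, wk k y ∂μ = ξ k := by
    intro k
    rw [show (fun y => wk k y) = fun y => ∑ i, ξ i * v i y k from rfl]
    rw [integral_finset_sum _ fun i _ => (hvint i k).const_mul (ξ i)]
    simp_rw [integral_const_mul, hvval]
    simp [Pi.single_apply]
  -- bilinearity pointwise
  have hbil : ∀ y, (∑ i, ξ i • v i y) ⬝ᵥ (K y).mulVec (∑ j, ξ j • v j y)
      = ∑ i, ∑ j, ξ i * ξ j * (v i y ⬝ᵥ (K y).mulVec (v j y)) := by
    intro y
    rw [show (K y).mulVec (∑ j, ξ j • v j y) = ∑ j, ξ j • (K y).mulVec (v j y) by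
      rw [← Matrix.mulVecLin_apply, map_sum]
      simp [Matrix.mulVecLin_apply]]
    rw [sum_dp]
    refine Finset.sum_congr rfl fun i _ => ?_
    rw [smul_dotProduct, dp_sum]
    simp only [dotProduct_smul, smul_eq_mul, Finset.mul_sum]
    exact Finset.sum_congr rfl fun j _ => by ring
  have hIntW : Integrable (fun y => (∑ i, ξ i • v i y) ⬝ᵥ (K y).mulVec (∑ j, ξ j • v j y)) μ := by
    have he : (fun y => (∑ i, ξ i • v i y) ⬝ᵥ (K y).mulVec (∑ j, ξ j • v j y))
        = fun y => ∑ i, ∑ j, ξ i * ξ j * (v i y ⬝ᵥ (K y).mulVec (v j y)) := funext hbil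
    rw [he]
    exact integrable_finset_sum _ fun i _ => integrable_finset_sum _ fun j _ =>
      (hQint i j).const_mul _
  -- K* quadratic form as an integral
  have hKsInt : ξ ⬝ᵥ Kstar.mulVec ξ
      = ∫ y, (∑ i, ξ i • v i y) ⬝ᵥ (K y).mulVec (∑ j, ξ j • v j y) ∂μ := by
    have h1 : ξ ⬝ᵥ Kstar.mulVec ξ = ∑ i, ∑ j, ξ i * ξ j * Kstar i j := by
      simp only [dotProduct, Matrix.mulVec, Finset.mul_sum]
      exact Finset.sum_congr rfl fun i _ => Finset.sum_congr rfl fun j _ => by ring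
    rw [h1]
    simp_rw [hKs', ← integral_const_mul]
    calc ∑ i, ∑ j, ∫ y, ξ i * ξ j * (v i y ⬝ᵥ (K y).mulVec (v j y)) ∂μ
        = ∑ i, ∫ y, ∑ j, ξ i * ξ j * (v i y ⬝ᵥ (K y).mulVec (v j y)) ∂μ :=
          Finset.sum_congr rfl fun i _ =>
            (integral_finset_sum _ fun j _ => (hQint i j).const_mul _).symm
      _ = ∫ y, ∑ i, ∑ j, ξ i * ξ j * (v i y ⬝ᵥ (K y).mulVec (v j y)) ∂μ :=
          (integral_finset_sum _ fun i _ => integrable_finset_sum _ fun j _ =>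
            (hQint i j).const_mul _).symm
      _ = _ := integral_congr_ae (Filter.Eventually.of_forall fun y => (hbil y).symm)
  have hpos : 0 < ξ ⬝ᵥ ξ := by
    rcases (hdnn ξ).lt_or_eq with h | h
    · exact h
    · exact absurd (dotProduct_self_eq_zero.1 h.symm) hξ
  refine ⟨?_, mul_pos hβ hpos⟩
  have hchain1 : β * (ξ ⬝ᵥ ξ) ≤ β * ∑ k, ∫ y, (wk k y) ^ 2 ∂μ := by
    apply mul_le_mul_of_nonneg_left _ hβ.le
    have hd : ξ ⬝ᵥ ξ = ∑ k, (∫ y, wk k y ∂μ) ^ 2 := by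
      simp_rw [hwval]
      simp [dotProduct, pow_two]
    rw [hd]
    exact Finset.sum_le_sum fun k _ => cs_sq (hwint k) (hw2 k)
  have hchain2 : β * ∑ k, ∫ y, (wk k y) ^ 2 ∂μ = ∫ y, β * ∑ k, (wk k y) ^ 2 ∂μ := by
    rw [← integral_finset_sum _ fun k _ => hw2 k, integral_const_mul]
  have hchain3 : ∫ y, β * ∑ k, (wk k y) ^ 2 ∂μ
      ≤ ∫ y, (∑ i, ξ i • v i y) ⬝ᵥ (K y).mulVec (∑ j, ξ j • v j y) ∂μ := by
    refine integral_mono_of_nonneg (Filter.Eventually.of_forall fun y =>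
      mul_nonneg hβ.le (Finset.sum_nonneg fun k _ => sq_nonneg _)) hIntW
      (Filter.Eventually.of_forall fun y => ?_)
    have hsum : ∑ k, (wk k y) ^ 2 = (∑ i, ξ i • v i y) ⬝ᵥ (∑ i, ξ i • v i y) := by
      simp [hwk, dotProduct, Finset.sum_apply, Pi.smul_apply, smul_eq_mul, pow_two]
    show β * ∑ k, (wk k y) ^ 2 ≤ (∑ i, ξ i • v i y) ⬝ᵥ (K y).mulVec (∑ j, ξ j • v j y)
    rw [hsum]
    exact (hell y _).1
  rw [hKsInt]
  linarith
end

section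
/- Linear convergence of the L-scheme fixed point iteration: let b : ℝ → ℝ be nondecreasing and Lipschitz with constant L_b, and let L ≥ L_b. Define the scalar iteration map arising from the L-scheme, T(p) = p − (L + CΔt)⁻¹ (b(p) − g + CΔt·p) for constants C, Δt > 0 and data g (with b(p*) + CΔt p* = g at the fixed point p*). Then T is a contraction with contraction factor at most (L)/(L + CΔt) < 1, hence the iteration p^{(i)} = T(p^{(i-1)}) converges to p* for any initial guess. -/
/-!
Writing `κ = L + CΔt`, one has `T p - T q = κ⁻¹ ((L p - b p) - (L q - b q))`. Because `b` is
nondecreasing with slopes at most `L`, the map `p ↦ L p - b p` is again `L`-Lipschitz, so `T` is a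
contraction with constant `L / κ < 1`, and the Banach fixed point theorem makes its iterates
converge to its fixed point `p*`.
-/

open NNReal

/-- The scalar L-scheme iteration map `T(p) = p − (L + CΔt)⁻¹ (b(p) + CΔt·p − g)`. -/
noncomputable def Tmap (b : ℝ → ℝ) (L C Δt g : ℝ) : ℝ → ℝ :=
  fun p => p - (L + C * Δt)⁻¹ * (b p + C * Δt * p - g)

theorem abs_sub_sub_le_of_monotone {b : ℝ → ℝ} {L : ℝ} (hmono : Monotone b)
    (hlip : ∀ x y, |b x - b y| ≤ L * |x - y|) (p q : ℝ) :
    |L * (p - q) - (b p - b q)| ≤ L * |p - q| := by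
  wlog hqp : q ≤ p generalizing p q
  · have h := this q p (le_of_not_ge hqp)
    rwa [abs_sub_comm q p, ← abs_neg, show -(L * (q - p) - (b q - b p))
      = L * (p - q) - (b p - b q) by ring] at h
  have hb : 0 ≤ b p - b q := sub_nonneg.2 (hmono hqp)
  have hbL : b p - b q ≤ L * (p - q) := by
    simpa [abs_of_nonneg hb, abs_of_nonneg (sub_nonneg.2 hqp)] using hlip p q
  rw [abs_of_nonneg (sub_nonneg.2 hqp), abs_le]
  constructor <;> linarith

section Tmap

variable {b : ℝ → ℝ} {L C Δt g : ℝ}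

theorem Tmap_sub_Tmap (hκ : L + C * Δt ≠ 0) (p q : ℝ) :
    Tmap b L C Δt g p - Tmap b L C Δt g q
      = (L + C * Δt)⁻¹ * (L * (p - q) - (b p - b q)) := by
  simp only [Tmap]
  field_simp
  ring

theorem abs_Tmap_sub_Tmap_le (hmono : Monotone b) (hlip : ∀ x y, |b x - b y| ≤ L * |x - y|)
    (hκ : 0 < L + C * Δt) (p q : ℝ) :
    |Tmap b L C Δt g p - Tmap b L C Δt g q| ≤ L / (L + C * Δt) * |p - q| := by
  rw [Tmap_sub_Tmap hκ.ne', abs_mul, abs_of_pos (inv_pos.2 hκ), div_eq_inv_mul, mul_assoc]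
  exact mul_le_mul_of_nonneg_left (abs_sub_sub_le_of_monotone hmono hlip p q) (inv_pos.2 hκ).le

theorem Tmap_isFixedPt {pstar : ℝ} (hfix : b pstar + C * Δt * pstar = g) :
    Function.IsFixedPt (Tmap b L C Δt g) pstar := by
  simp [Function.IsFixedPt, Tmap, hfix]

end Tmap

/-- Linear convergence of the L-scheme: if `b` is nondecreasing and Lipschitz with
constant `L_b ≤ L`, then `T` is a contraction with factor at most `L/(L + CΔt) < 1`,
and the iteration converges to the fixed point `p*` from any initial guess. -/
theorem stmt6 (b : ℝ → ℝ) (Lb L C Δt g pstar : ℝ)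
    (hmono : Monotone b) (hlip : ∀ x y : ℝ, |b x - b y| ≤ Lb * |x - y|)
    (hLb : Lb ≤ L) (hC : 0 < C) (hΔt : 0 < Δt)
    (hfix : b pstar + C * Δt * pstar = g) :
    (∀ p q : ℝ, |Tmap b L C Δt g p - Tmap b L C Δt g q| ≤ (L / (L + C * Δt)) * |p - q|) ∧
    L / (L + C * Δt) < 1 ∧
    ∀ p0 : ℝ, Filter.Tendsto (fun i => (Tmap b L C Δt g)^[i] p0) Filter.atTop (nhds pstar) := by
  have hlipL : ∀ x y, |b x - b y| ≤ L * |x - y| :=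
    fun x y => (hlip x y).trans (by gcongr)
  have hL : 0 ≤ L := by simpa using (abs_nonneg _).trans (hlipL 1 0)
  have hCΔt : 0 < C * Δt := mul_pos hC hΔt
  have hκ : 0 < L + C * Δt := by linarith
  have hcontr := abs_Tmap_sub_Tmap_le (g := g) hmono hlipL hκ
  have hk1 : L / (L + C * Δt) < 1 := (div_lt_one hκ).2 (by linarith)
  refine ⟨hcontr, hk1, fun p0 => ?_⟩
  let K : ℝ≥0 := ⟨L / (L + C * Δt), div_nonneg hL hκ.le⟩
  have hT : ContractingWith K (Tmap b L C Δt g) :=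
    ⟨hk1, LipschitzWith.of_dist_le_mul hcontr⟩
  exact hT.fixedPoint_unique (Tmap_isFixedPt hfix) ▸ hT.tendsto_iterate_fixedPoint p0
end

section
/- Ellipticity bounds of the homogenized tensor in terms of harmonic and arithmetic means: under the hypotheses of the cell problem with β ≤ K(y) (as quadratic forms) ≤ λ, the homogenized tensor satisfies β‖ξ‖² ≤ ξᵀ K* ξ ≤ λ‖ξ‖² for all ξ ∈ ℝ^d. -/
open Matrix MeasureTheory

lemma hs12_dot_sum {d : ℕ} (v : Fin d → ℝ) (f : Fin d → (Fin d → ℝ)) :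
    v ⬝ᵥ (∑ i, f i) = ∑ i, v ⬝ᵥ f i := by
  simp only [dotProduct, Finset.sum_apply, Finset.mul_sum]
  exact Finset.sum_comm

lemma hs12_sum_dot {d : ℕ} (v : Fin d → ℝ) (f : Fin d → (Fin d → ℝ)) :
    (∑ i, f i) ⬝ᵥ v = ∑ i, f i ⬝ᵥ v := by
  simp only [dotProduct, Finset.sum_apply, Finset.sum_mul]
  exact Finset.sum_comm

lemma hs12_mulVec_sum {d : ℕ} (M : Matrix (Fin d) (Fin d) ℝ) (f : Fin d → (Fin d → ℝ)) :
    M.mulVec (∑ i, f i) = ∑ i, M.mulVec (f i) := by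
  funext k
  simp only [Matrix.mulVec, dotProduct, Finset.sum_apply, Finset.mul_sum]
  exact Finset.sum_comm

lemma hs12_sum_quad {d : ℕ} (M : Matrix (Fin d) (Fin d) ℝ) (c : Fin d → ℝ)
    (w z : Fin d → (Fin d → ℝ)) :
    (∑ i, c i • w i) ⬝ᵥ M.mulVec (∑ j, c j • z j)
      = ∑ i, ∑ j, c i * c j * (w i ⬝ᵥ M.mulVec (z j)) := by
  rw [hs12_sum_dot]
  refine Finset.sum_congr rfl fun i _ => ?_
  rw [hs12_mulVec_sum, hs12_dot_sum]
  · refine Finset.sum_congr rfl fun j _ => ?_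
    rw [Matrix.mulVec_smul, smul_dotProduct, dotProduct_smul]
    simp [smul_eq_mul]; ring

lemma hs12_symm_dot {d : ℕ} {M : Matrix (Fin d) (Fin d) ℝ} (h : M.IsSymm)
    (a b : Fin d → ℝ) : a ⬝ᵥ M.mulVec b = b ⬝ᵥ M.mulVec a := by
  rw [Matrix.dotProduct_mulVec, ← Matrix.mulVec_transpose, h, dotProduct_comm]

lemma hs12_single_sum {d : ℕ} (ξ : Fin d → ℝ) :
    ∑ i, ξ i • (Pi.single i 1 : Fin d → ℝ) = ξ := by
  funext k
  simp [Pi.single_apply, Finset.sum_apply]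

lemma hs12_dot_self_nonneg {d : ℕ} (x : Fin d → ℝ) : 0 ≤ x ⬝ᵥ x :=
  Finset.sum_nonneg fun k _ => mul_self_nonneg _

/-- Ellipticity bounds for the homogenized tensor: if `β‖ψ‖² ≤ ψᵀK(y)ψ ≤ λ‖ψ‖²`,
then `β‖ξ‖² ≤ ξᵀ K* ξ ≤ λ‖ξ‖²` for all `ξ` (with `‖v‖² = v ⬝ᵥ v`, `g j = ∇ω^j`
the zero-mean periodic corrector gradients satisfying the weak formulation). -/
theorem stmt12 {d : ℕ} (K : (Fin d → ℝ) → Matrix (Fin d) (Fin d) ℝ)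
    (hmeas : ∀ i j : Fin d, Measurable fun y => K y i j)
    (β lam : ℝ) (hβ : 0 < β)
    (hsymm : ∀ y, (K y).IsSymm)
    (hell : ∀ y (ψ : Fin d → ℝ),
      β * (ψ ⬝ᵥ ψ) ≤ ψ ⬝ᵥ (K y).mulVec ψ ∧ ψ ⬝ᵥ (K y).mulVec ψ ≤ lam * (ψ ⬝ᵥ ψ))
    (g : Fin d → (Fin d → ℝ) → (Fin d → ℝ))
    (hmeasg : ∀ j, AEStronglyMeasurable (g j) (volume.restrict (Set.Icc (0 : Fin d → ℝ) 1)))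
    (hzero : ∀ j, ∫ y in Set.Icc (0 : Fin d → ℝ) 1, g j y = 0)
    (hweak : ∀ i j : Fin d,
      ∫ y in Set.Icc (0 : Fin d → ℝ) 1, ((K y).mulVec (Pi.single j 1 + g j y)) ⬝ᵥ g i y = 0)
    (hInt : ∀ i j : Fin d, IntegrableOn
      (fun y => (Pi.single i 1 + g i y) ⬝ᵥ (K y).mulVec (Pi.single j 1 + g j y))
      (Set.Icc (0 : Fin d → ℝ) 1))
    (hIntgg : ∀ i j : Fin d, IntegrableOn
      (fun y => g i y ⬝ᵥ (K y).mulVec (g j y)) (Set.Icc (0 : Fin d → ℝ) 1))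
    (hInteg : ∀ i j : Fin d, IntegrableOn
      (fun y => Pi.single i 1 ⬝ᵥ (K y).mulVec (g j y)) (Set.Icc (0 : Fin d → ℝ) 1))
    (hIntee : ∀ i j : Fin d, IntegrableOn
      (fun y => Pi.single i 1 ⬝ᵥ (K y).mulVec (Pi.single j (1:ℝ))) (Set.Icc (0 : Fin d → ℝ) 1))
    (Kstar : Matrix (Fin d) (Fin d) ℝ)
    (hKstar : ∀ i j : Fin d, Kstar i j =
      ∫ y in Set.Icc (0 : Fin d → ℝ) 1,
        (Pi.single i 1 + g i y) ⬝ᵥ (K y).mulVec (Pi.single j 1 + g j y)) :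
    ∀ ξ : Fin d → ℝ,
      β * (ξ ⬝ᵥ ξ) ≤ ξ ⬝ᵥ Kstar.mulVec ξ ∧ ξ ⬝ᵥ Kstar.mulVec ξ ≤ lam * (ξ ⬝ᵥ ξ) := by
  classical
  intro ξ
  set S : Set (Fin d → ℝ) := Set.Icc 0 1 with hS
  have hSm : MeasurableSet S := measurableSet_Icc
  have hvol : volume S = 1 := by
    rw [hS, Real.volume_Icc_pi]
    simp
  haveI : IsFiniteMeasure (volume.restrict S) :=
    ⟨by rw [Measure.restrict_apply_univ, hvol]; exact ENNReal.one_lt_top⟩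
  have hvolR : (volume S).toReal = 1 := by rw [hvol]; simp
  -- abbreviations (as plain functions)
  set G : (Fin d → ℝ) → (Fin d → ℝ) := fun y => ∑ j, ξ j • g j y with hG
  set v : (Fin d → ℝ) → (Fin d → ℝ) := fun y => ξ + G y with hv
  have hvsum : ∀ y, v y = ∑ i, ξ i • (Pi.single i 1 + g i y) := by
    intro y
    funext k
    simp only [hv, hG, Pi.add_apply, Finset.sum_apply, Pi.smul_apply, smul_eq_mul,
      Pi.single_apply, mul_add]
    rw [Finset.sum_add_distrib]
    congr 1
    simp [mul_ite]
  -- generic interchange lemmas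
  have intsum : ∀ (f : Fin d → Fin d → (Fin d → ℝ) → ℝ),
      (∀ i j, IntegrableOn (f i j) S) →
      Integrable (fun y => ∑ i, ∑ j, ξ i * ξ j * f i j y) (volume.restrict S) := fun f hf =>
    integrable_finset_sum _ fun i _ => integrable_finset_sum _ fun j _ => (hf i j).const_mul _
  have intint : ∀ (f : Fin d → Fin d → (Fin d → ℝ) → ℝ),
      (∀ i j, IntegrableOn (f i j) S) →
      ∫ y in S, (∑ i, ∑ j, ξ i * ξ j * f i j y)
        = ∑ i, ∑ j, ξ i * ξ j * ∫ y in S, f i j y := by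
    intro f hf
    rw [integral_finset_sum _
      (fun i _ => integrable_finset_sum _ fun j _ => (hf i j).const_mul _)]
    refine Finset.sum_congr rfl fun i _ => ?_
    rw [integral_finset_sum _ (fun j _ => (hf i j).const_mul _)]
    exact Finset.sum_congr rfl fun j _ => integral_const_mul _ _
  -- more integrabilities
  have hIge : ∀ i j : Fin d,
      IntegrableOn (fun y => g i y ⬝ᵥ (K y).mulVec (Pi.single j 1)) S := by
    intro i j
    have he : (fun y => g i y ⬝ᵥ (K y).mulVec (Pi.single j 1))
        = fun y => Pi.single j 1 ⬝ᵥ (K y).mulVec (g i y) :=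
      funext fun y => hs12_symm_dot (hsymm y) _ _
    rw [he]; exact hInteg j i
  have hIgw : ∀ i j : Fin d,
      IntegrableOn (fun y => g i y ⬝ᵥ (K y).mulVec (Pi.single j 1 + g j y)) S := by
    intro i j
    have he : (fun y => g i y ⬝ᵥ (K y).mulVec (Pi.single j 1 + g j y))
        = fun y => g i y ⬝ᵥ (K y).mulVec (Pi.single j 1) + g i y ⬝ᵥ (K y).mulVec (g j y) :=
      funext fun y => by rw [Matrix.mulVec_add, dotProduct_add]
    rw [he]; exact (hIge i j).add (hIntgg i j)
  -- pointwise expansions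
  have hFy : ∀ y, v y ⬝ᵥ (K y).mulVec (v y)
      = ∑ i, ∑ j, ξ i * ξ j *
        ((Pi.single i 1 + g i y) ⬝ᵥ (K y).mulVec (Pi.single j 1 + g j y)) := by
    intro y
    rw [hvsum y]
    exact hs12_sum_quad (K y) ξ _ _
  have hAy : ∀ y, ξ ⬝ᵥ (K y).mulVec ξ
      = ∑ i, ∑ j, ξ i * ξ j * (Pi.single i 1 ⬝ᵥ (K y).mulVec (Pi.single j 1)) := by
    intro y
    have h := hs12_sum_quad (K y) ξ (fun i => (Pi.single i 1 : Fin d → ℝ))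
      (fun j => (Pi.single j 1 : Fin d → ℝ))
    rwa [hs12_single_sum] at h
  have hBy : ∀ y, ξ ⬝ᵥ (K y).mulVec (G y)
      = ∑ i, ∑ j, ξ i * ξ j * (Pi.single i 1 ⬝ᵥ (K y).mulVec (g j y)) := by
    intro y
    have h := hs12_sum_quad (K y) ξ (fun i => (Pi.single i 1 : Fin d → ℝ))
      (fun j => g j y)
    rwa [hs12_single_sum] at h
  have hCy : ∀ y, G y ⬝ᵥ (K y).mulVec (G y)
      = ∑ i, ∑ j, ξ i * ξ j * (g i y ⬝ᵥ (K y).mulVec (g j y)) := fun y =>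
    hs12_sum_quad (K y) ξ _ _
  have hGvy : ∀ y, G y ⬝ᵥ (K y).mulVec (v y)
      = ∑ i, ∑ j, ξ i * ξ j *
        (g i y ⬝ᵥ (K y).mulVec (Pi.single j 1 + g j y)) := by
    intro y
    rw [hvsum y]
    exact hs12_sum_quad (K y) ξ _ _
  -- integrabilities of the named integrands
  have hAint : Integrable (fun y => ξ ⬝ᵥ (K y).mulVec ξ) (volume.restrict S) := by
    rw [funext hAy]; exact intsum _ hIntee
  have hBint : Integrable (fun y => ξ ⬝ᵥ (K y).mulVec (G y)) (volume.restrict S) := by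
    rw [funext hBy]; exact intsum _ hInteg
  have hCCint : Integrable (fun y => G y ⬝ᵥ (K y).mulVec (G y)) (volume.restrict S) := by
    rw [funext hCy]; exact intsum _ hIntgg
  have hGvint : Integrable (fun y => G y ⬝ᵥ (K y).mulVec (v y)) (volume.restrict S) := by
    rw [funext hGvy]; exact intsum _ hIgw
  have hFint : Integrable (fun y => v y ⬝ᵥ (K y).mulVec (v y)) (volume.restrict S) := by
    rw [funext hFy]; exact intsum _ hInt
  -- the quadratic form of Kstar equals ∫ v K v
  have E1 : ξ ⬝ᵥ Kstar.mulVec ξ = ∑ i, ∑ j, ξ i * ξ j * Kstar i j := by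
    simp only [Matrix.mulVec, dotProduct, Finset.mul_sum]
    exact Finset.sum_congr rfl fun i _ => Finset.sum_congr rfl fun j _ => by ring
  have Ekey : ξ ⬝ᵥ Kstar.mulVec ξ = ∫ y in S, v y ⬝ᵥ (K y).mulVec (v y) := by
    rw [E1, funext hFy, intint _ hInt]
    exact Finset.sum_congr rfl fun i _ => Finset.sum_congr rfl fun j _ => by
      rw [hKstar i j]
  -- ∫ G ⬝ K v = 0
  have hGv0 : ∫ y in S, G y ⬝ᵥ (K y).mulVec (v y) = 0 := by
    rw [funext hGvy, intint _ hIgw]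
    refine Finset.sum_eq_zero fun i _ => Finset.sum_eq_zero fun j _ => ?_
    have he : (fun y => g i y ⬝ᵥ (K y).mulVec (Pi.single j 1 + g j y))
        = fun y => ((K y).mulVec (Pi.single j 1 + g j y)) ⬝ᵥ g i y :=
      funext fun y => dotProduct_comm _ _
    rw [he, hweak i j, mul_zero]
  -- split ∫ v K v
  have hsplit : ∫ y in S, v y ⬝ᵥ (K y).mulVec (v y)
      = (∫ y in S, ξ ⬝ᵥ (K y).mulVec ξ) + (∫ y in S, ξ ⬝ᵥ (K y).mulVec (G y))
        + (∫ y in S, G y ⬝ᵥ (K y).mulVec (v y)) := by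
    have he : (fun y => v y ⬝ᵥ (K y).mulVec (v y))
        = fun y => (ξ ⬝ᵥ (K y).mulVec ξ + ξ ⬝ᵥ (K y).mulVec (G y))
            + G y ⬝ᵥ (K y).mulVec (v y) := by
      funext y
      simp only [hv]
      rw [add_dotProduct, Matrix.mulVec_add, dotProduct_add]
    have h1 : Integrable (fun y => ξ ⬝ᵥ (K y).mulVec ξ + ξ ⬝ᵥ (K y).mulVec (G y))
        (volume.restrict S) := hAint.add hBint
    rw [he, integral_add h1 hGvint, integral_add hAint hBint]
  -- ∫ ξ K G = - ∫ G K G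
  have hBeq : ∫ y in S, ξ ⬝ᵥ (K y).mulVec (G y)
      = -(∫ y in S, G y ⬝ᵥ (K y).mulVec (G y)) := by
    have hGKξint : Integrable (fun y => G y ⬝ᵥ (K y).mulVec ξ) (volume.restrict S) := by
      have he : (fun y => G y ⬝ᵥ (K y).mulVec ξ) = fun y => ξ ⬝ᵥ (K y).mulVec (G y) :=
        funext fun y => hs12_symm_dot (hsymm y) _ _
      rw [he]; exact hBint
    have he2 : (fun y => G y ⬝ᵥ (K y).mulVec (v y))
        = fun y => G y ⬝ᵥ (K y).mulVec ξ + G y ⬝ᵥ (K y).mulVec (G y) :=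
      funext fun y => by
        simp only [hv]
        rw [Matrix.mulVec_add, dotProduct_add]
    have h0 := hGv0
    rw [he2, integral_add hGKξint hCCint] at h0
    have he3 : (fun y => ξ ⬝ᵥ (K y).mulVec (G y)) = fun y => G y ⬝ᵥ (K y).mulVec ξ :=
      funext fun y => hs12_symm_dot (hsymm y) _ _
    rw [he3]
    linarith
  have hCCnn : 0 ≤ ∫ y in S, G y ⬝ᵥ (K y).mulVec (G y) := by
    refine setIntegral_nonneg hSm fun y _ => ?_
    have h1 := (hell y (G y)).1
    have h2 : 0 ≤ β * (G y ⬝ᵥ G y) :=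
      mul_nonneg hβ.le (hs12_dot_self_nonneg _)
    linarith
  have hAle : ∫ y in S, ξ ⬝ᵥ (K y).mulVec ξ ≤ lam * (ξ ⬝ᵥ ξ) := by
    have := integral_mono hAint (integrable_const (lam * (ξ ⬝ᵥ ξ)))
      (fun y => (hell y ξ).2)
    rwa [setIntegral_const, measureReal_def, hvolR, one_smul] at this
  constructor
  · -- lower bound
    -- integrability of components of g
    have hcompm : ∀ (j k : Fin d),
        AEStronglyMeasurable (fun y => g j y k) (volume.restrict S) := fun j k =>
      (continuous_apply k).comp_aestronglyMeasurable (hmeasg j)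
    have hsqint : ∀ j k : Fin d,
        Integrable (fun y => g j y k * g j y k) (volume.restrict S) := by
      intro j k
      refine Integrable.mono' ((hIntgg j j).const_mul β⁻¹)
        ((hcompm j k).mul (hcompm j k)) (Filter.Eventually.of_forall fun y => ?_)
      have h1 : g j y k * g j y k ≤ g j y ⬝ᵥ g j y := by
        refine Finset.single_le_sum (f := fun l => g j y l * g j y l)
          (fun l _ => mul_self_nonneg _) (Finset.mem_univ k)
      have h2 := (hell y (g j y)).1
      have h3 : g j y ⬝ᵥ g j y ≤ β⁻¹ * (g j y ⬝ᵥ (K y).mulVec (g j y)) := by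
        rw [← div_eq_inv_mul, le_div_iff₀ hβ]
        linarith
      rw [Real.norm_eq_abs, abs_of_nonneg (mul_self_nonneg _)]
      linarith
    have hcompint : ∀ j k : Fin d,
        Integrable (fun y => g j y k) (volume.restrict S) := by
      intro j k
      refine Integrable.mono' (((integrable_const (1:ℝ)).add (hsqint j k)).div_const 2)
        (hcompm j k) (Filter.Eventually.of_forall fun y => ?_)
      rw [Real.norm_eq_abs]
      have := sq_nonneg (|g j y k| - 1)
      have h4 : |g j y k| * |g j y k| = g j y k * g j y k := abs_mul_abs_self _
      simp only [Pi.add_apply]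
      nlinarith [abs_nonneg (g j y k)]
    have hgint : ∀ j, Integrable (g j) (volume.restrict S) := by
      intro j
      have he : g j = fun y => ∑ k, g j y k • (Pi.single k 1 : Fin d → ℝ) :=
        funext fun y => (hs12_single_sum (g j y)).symm
      rw [he]
      exact integrable_finset_sum _ fun k _ => (hcompint j k).smul_const _
    have hcomp0 : ∀ j k : Fin d, ∫ y in S, g j y k = 0 := by
      intro j k
      have := (ContinuousLinearMap.proj (R := ℝ) (φ := fun _ : Fin d => ℝ) k).integral_comp_comm
        (hgint j)
      simp only [ContinuousLinearMap.proj_apply] at this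
      rw [this, hzero j]
      rfl
    have hxiGint : Integrable (fun y => ξ ⬝ᵥ G y) (volume.restrict S) := by
      have he : (fun y => ξ ⬝ᵥ G y) = fun y => ∑ j, ∑ k, ξ j * (ξ k * g j y k) := by
        funext y
        simp only [hG]
        rw [hs12_dot_sum]
        refine Finset.sum_congr rfl fun j _ => ?_
        rw [dotProduct_smul, smul_eq_mul]
        simp only [dotProduct, Finset.mul_sum]
      rw [he]
      exact integrable_finset_sum _ fun j _ => integrable_finset_sum _ fun k _ =>
        ((hcompint j k).const_mul _).const_mul _
    have hxiG0 : ∫ y in S, ξ ⬝ᵥ G y = 0 := by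
      have he : (fun y => ξ ⬝ᵥ G y) = fun y => ∑ j, ∑ k, ξ j * (ξ k * g j y k) := by
        funext y
        simp only [hG]
        rw [hs12_dot_sum]
        refine Finset.sum_congr rfl fun j _ => ?_
        rw [dotProduct_smul, smul_eq_mul]
        simp only [dotProduct, Finset.mul_sum]
      rw [he, integral_finset_sum _ (fun j _ => integrable_finset_sum _ fun k _ =>
        ((hcompint j k).const_mul _).const_mul _)]
      refine Finset.sum_eq_zero fun j _ => ?_
      rw [integral_finset_sum _ (fun k _ => ((hcompint j k).const_mul _).const_mul _)]
      refine Finset.sum_eq_zero fun k _ => ?_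
      rw [integral_const_mul, integral_const_mul, hcomp0 j k]
      ring
    -- v ⬝ v is integrable
    have hvmeas : AEStronglyMeasurable v (volume.restrict S) := by
      rw [hv]
      exact aestronglyMeasurable_const.add
        (Finset.aestronglyMeasurable_fun_sum _ fun j _ => (hmeasg j).const_smul (ξ j))
    have hvvmeas : AEStronglyMeasurable (fun y => v y ⬝ᵥ v y) (volume.restrict S) := by
      have hc : Continuous fun x : Fin d → ℝ => x ⬝ᵥ x :=
        continuous_finset_sum _ fun k _ => (continuous_apply k).mul (continuous_apply k)
      exact hc.comp_aestronglyMeasurable hvmeas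
    have hvvint : Integrable (fun y => v y ⬝ᵥ v y) (volume.restrict S) := by
      refine Integrable.mono' (hFint.const_mul β⁻¹) hvvmeas
        (Filter.Eventually.of_forall fun y => ?_)
      have h1 := (hell y (v y)).1
      rw [Real.norm_eq_abs, abs_of_nonneg (hs12_dot_self_nonneg _)]
      rw [← div_eq_inv_mul, le_div_iff₀ hβ]
      linarith
    -- ∫ v⬝v ≥ ξ⬝ξ
    have hvvlow : ξ ⬝ᵥ ξ ≤ ∫ y in S, v y ⬝ᵥ v y := by
      have hsum_int : Integrable (fun y => ξ ⬝ᵥ ξ + 2 * (ξ ⬝ᵥ G y)) (volume.restrict S) :=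
        (integrable_const _).add (hxiGint.const_mul 2)
      have hmono := integral_mono hsum_int hvvint
        (fun y => by
          have hexp : v y ⬝ᵥ v y = ξ ⬝ᵥ ξ + 2 * (ξ ⬝ᵥ G y) + G y ⬝ᵥ G y := by
            simp only [hv]
            rw [add_dotProduct, dotProduct_add, dotProduct_add,
              dotProduct_comm (G y) ξ]
            ring
          have := hs12_dot_self_nonneg (G y)
          simp only [Pi.add_apply]
          linarith)
      rw [integral_add (integrable_const _) (hxiGint.const_mul 2),
        setIntegral_const, measureReal_def, hvolR, one_smul, integral_const_mul, hxiG0] at hmono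
      linarith
    have hlow2 : β * ∫ y in S, v y ⬝ᵥ v y ≤ ∫ y in S, v y ⬝ᵥ (K y).mulVec (v y) := by
      rw [← integral_const_mul]
      exact integral_mono (hvvint.const_mul β) hFint (fun y => (hell y (v y)).1)
    rw [Ekey]
    calc β * (ξ ⬝ᵥ ξ) ≤ β * ∫ y in S, v y ⬝ᵥ v y := by
          exact mul_le_mul_of_nonneg_left hvvlow hβ.le
      _ ≤ _ := hlow2
  · -- upper bound
    rw [Ekey, hsplit, hGv0, hBeq]
    linarith
end
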